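/- A finite connected simple graph G on n vertices satisfies cdim(G) = n − 1 if and only if G is uniformly k-connected for some k, i.e., there is k such that κ(v,w) = k for every pair of distinct vertices v,w of G. -/
import Mathlib


open SimpleGraph

namespace ConnDim

open Classical in
/-- The local connectivity `κ(a,b)`: the maximum number of internally vertex-disjoint
`a`-`b` paths, with `κ(a,a) = ∞`. -/
noncomputable def localConn {V : Type*} (G : SimpleGraph V) (a b : V) : ℕ∞ :=
  if a = b then ⊤
  else sSup {n : ℕ∞ | ∃ Ps : Finset (G.Path a b),
    (∀ p ∈ Ps, ∀ q ∈ Ps, p ≠ q → ∀ x : V,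
        x ∈ p.1.support → x ∈ q.1.support → x = a ∨ x = b) ∧
    (Ps.card : ℕ∞) = n}

/-- A set `W` is connectivity resolving if vertices are determined by their
local connectivities to the elements of `W`. -/
def ConnResolving {V : Type*} (G : SimpleGraph V) (W : Set V) : Prop :=
  ∀ u v : V, (∀ w ∈ W, localConn G u w = localConn G v w) → u = v

/-- The connectivity dimension: minimum cardinality of a connectivity resolving set. -/
noncomputable def cdim {V : Type*} (G : SimpleGraph V) : ℕ :=
  sInf {n : ℕ | ∃ W : Set V, ConnResolving G W ∧ W.ncard = n}

/-- A set `W` is metric resolving if vertices are determined by their distances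
to the elements of `W`. -/
def MetricResolving {V : Type*} (G : SimpleGraph V) (W : Set V) : Prop :=
  ∀ u v : V, (∀ w ∈ W, G.dist u w = G.dist v w) → u = v

/-- The metric dimension: minimum cardinality of a metric resolving set. -/
noncomputable def mdim {V : Type*} (G : SimpleGraph V) : ℕ :=
  sInf {n : ℕ | ∃ W : Set V, MetricResolving G W ∧ W.ncard = n}

/-- `G` forces a `𝟙` representation if every minimum resolving set (basis) `B` admits a
vertex whose local connectivity to every element of `B` equals `1`. -/
def ForcesOne {V : Type*} (G : SimpleGraph V) : Prop :=
  ∀ B : Set V, ConnResolving G B → B.ncard = cdim G →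
    ∃ v : V, ∀ b ∈ B, localConn G v b = 1

/-- A cut vertex of a connected graph: its removal disconnects the graph. -/
def IsCutVertex {V : Type*} (G : SimpleGraph V) (v : V) : Prop :=
  G.Connected ∧ ¬ (G.induce {u : V | u ≠ v}).Connected

/-- A block of `G`: a maximal connected subgraph of `G` without a cut vertex of itself. -/
def IsBlock {V : Type*} (G : SimpleGraph V) (H : G.Subgraph) : Prop :=
  H.coe.Connected ∧ (∀ v, ¬ IsCutVertex H.coe v) ∧
  ∀ H' : G.Subgraph, H ≤ H' → H'.coe.Connected → (∀ v, ¬ IsCutVertex H'.coe v) → H' = H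

/-- The number of blocks of `G`. -/
noncomputable def numBlocks {V : Type*} (G : SimpleGraph V) : ℕ :=
  Nat.card {H : G.Subgraph // IsBlock G H}

/-- Two vertices are twins if they have the same neighborhood in the graph with
both of them deleted. -/
def AreTwins {V : Type*} (G : SimpleGraph V) (a b : V) : Prop :=
  ∀ x : V, x ≠ a → x ≠ b → (G.Adj a x ↔ G.Adj b x)

/-- The threshold graph generated by a binary sequence `L` (`false` = isolated vertex,
`true` = dominating vertex): two vertices are adjacent iff the later one was added
as a dominating vertex. -/
def thresholdGraph (L : List Bool) : SimpleGraph (Fin L.length) :=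
  SimpleGraph.fromRel (fun i j => i < j ∧ L.get j = true)

/-- The alternating binary sequence `0,1,0,1,…,0,1` of length `2 * n`. -/
def altList (n : ℕ) : List Bool := (List.replicate n [false, true]).flatten

/-- The join of two graphs on disjoint vertex sets by the bridge `v₁v₂`. -/
def bridgeJoin {V₁ V₂ : Type*} (G₁ : SimpleGraph V₁) (G₂ : SimpleGraph V₂)
    (v₁ : V₁) (v₂ : V₂) : SimpleGraph (V₁ ⊕ V₂) :=
  G₁.map Function.Embedding.inl ⊔ G₂.map Function.Embedding.inr
    ⊔ SimpleGraph.fromEdgeSet {s(Sum.inl v₁, Sum.inr v₂)}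

/-- The graph obtained from `G` by attaching a new leaf (the vertex `none`) to `u`. -/
def attachLeaf {V : Type*} (G : SimpleGraph V) (u : V) : SimpleGraph (Option V) :=
  G.map Function.Embedding.some ⊔ SimpleGraph.fromEdgeSet {s(some u, (none : Option V))}

/-- The chain of `t` triangles (triangle `i` has vertices `inl i.castSucc`, `inl i.succ`,
`inr (inl i)`), with a leaf `inr (inr ())` attached to the end vertex `inl 0`. -/
def triChain (t : ℕ) : SimpleGraph (Fin (t+1) ⊕ Fin t ⊕ Unit) :=
  SimpleGraph.fromRel (fun a b =>
    match a, b with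
    | Sum.inl i, Sum.inl j => (i : ℕ) + 1 = (j : ℕ)
    | Sum.inr (Sum.inl i), Sum.inl j => j = Fin.castSucc i ∨ j = Fin.succ i
    | Sum.inr (Sum.inr _), Sum.inl j => j = 0
    | _, _ => False)

lemma localConn_self {V : Type*} (G : SimpleGraph V) (a : V) : localConn G a a = ⊤ := by
  simp [localConn]

lemma localConn_def_ne {V : Type*} (G : SimpleGraph V) {a b : V} (h : a ≠ b) :
    localConn G a b = sSup {n : ℕ∞ | ∃ Ps : Finset (G.Path a b),
      (∀ p ∈ Ps, ∀ q ∈ Ps, p ≠ q → ∀ x : V,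
          x ∈ p.1.support → x ∈ q.1.support → x = a ∨ x = b) ∧
      (Ps.card : ℕ∞) = n} := by
  rw [localConn, if_neg h]

lemma path_reverse_injective {V : Type*} {G : SimpleGraph V} {a b : V} :
    Function.Injective (SimpleGraph.Path.reverse : G.Path a b → G.Path b a) := by
  intro p q h
  have h1 : p.1.reverse = q.1.reverse := congrArg Subtype.val h
  exact Subtype.ext (by simpa using congrArg SimpleGraph.Walk.reverse h1)

lemma localConn_set_subset {V : Type*} (G : SimpleGraph V) (a b : V) :
    {n : ℕ∞ | ∃ Ps : Finset (G.Path a b),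
      (∀ p ∈ Ps, ∀ q ∈ Ps, p ≠ q → ∀ x : V,
          x ∈ p.1.support → x ∈ q.1.support → x = a ∨ x = b) ∧
      (Ps.card : ℕ∞) = n} ⊆
    {n : ℕ∞ | ∃ Ps : Finset (G.Path b a),
      (∀ p ∈ Ps, ∀ q ∈ Ps, p ≠ q → ∀ x : V,
          x ∈ p.1.support → x ∈ q.1.support → x = b ∨ x = a) ∧
      (Ps.card : ℕ∞) = n} := by
  classical
  rintro n ⟨Ps, hdisj, hcard⟩
  refine ⟨Ps.image SimpleGraph.Path.reverse, ?_, ?_⟩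
  · intro p hp q hq hpq x hxp hxq
    simp only [Finset.mem_image] at hp hq
    obtain ⟨p', hp', rfl⟩ := hp
    obtain ⟨q', hq', rfl⟩ := hq
    have hne : p' ≠ q' := fun h => hpq (by rw [h])
    have hxp' : x ∈ p'.1.support := by
      simpa [SimpleGraph.Walk.support_reverse] using hxp
    have hxq' : x ∈ q'.1.support := by
      simpa [SimpleGraph.Walk.support_reverse] using hxq
    exact (hdisj p' hp' q' hq' hne x hxp' hxq').symm
  · rw [Finset.card_image_of_injective _ path_reverse_injective, hcard]

lemma localConn_comm {V : Type*} (G : SimpleGraph V) (a b : V) :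
    localConn G a b = localConn G b a := by
  rcases eq_or_ne a b with rfl | h
  · rfl
  · rw [localConn_def_ne G h, localConn_def_ne G h.symm]
    exact congrArg sSup (Set.Subset.antisymm (localConn_set_subset G a b)
      (localConn_set_subset G b a))

lemma localConn_ne_top {V : Type*} [Fintype V] (G : SimpleGraph V) {a b : V} (h : a ≠ b) :
    localConn G a b ≠ ⊤ := by
  classical
  rw [localConn_def_ne G h]
  have hb : ∀ n ∈ {n : ℕ∞ | ∃ Ps : Finset (G.Path a b),
      (∀ p ∈ Ps, ∀ q ∈ Ps, p ≠ q → ∀ x : V,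
          x ∈ p.1.support → x ∈ q.1.support → x = a ∨ x = b) ∧
      (Ps.card : ℕ∞) = n}, n ≤ (Fintype.card (G.Path a b) : ℕ∞) := by
    rintro n ⟨Ps, _, rfl⟩
    exact_mod_cast Nat.cast_le.mpr (Finset.card_le_univ Ps)
  exact ne_top_of_le_ne_top (by simp) (sSup_le hb)


/-- a finite connected graph on `n` vertices has connectivity dimension `n - 1`
iff it is uniformly `k`-connected for some `k`. -/
theorem stmt2 {V : Type*} [Fintype V] (G : SimpleGraph V) (hG : G.Connected) :
    cdim G = Fintype.card V - 1 ↔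
      ∃ k : ℕ, ∀ v w : V, v ≠ w → localConn G v w = (k : ℕ∞) := by
  classical
  have hne : Nonempty V := hG.nonempty
  constructor
  · intro h
    have hC : ∀ u v w : V, u ≠ v → w ≠ u → w ≠ v →
        localConn G u w = localConn G v w := by
      by_contra hcon
      push_neg at hcon
      obtain ⟨u, v, w, huv, hwu, hwv, hne'⟩ := hcon
      have h3 : 3 ≤ Fintype.card V := by
        have hcard : ({u, v, w} : Finset V).card = 3 := by
          rw [Finset.card_insert_of_notMem (by simp [huv, hwu.symm]),
            Finset.card_insert_of_notMem (by simp [hwv.symm]), Finset.card_singleton]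
        calc 3 = ({u, v, w} : Finset V).card := hcard.symm
          _ ≤ Fintype.card V := Finset.card_le_univ _
      have hres : ConnResolving G ({u, v}ᶜ : Set V) := by
        intro x y hxy
        by_contra hxyne
        by_cases hx : x ∈ ({u, v}ᶜ : Set V)
        · have hx2 := hxy x hx
          rw [localConn_self] at hx2
          exact localConn_ne_top G (Ne.symm hxyne) hx2.symm
        by_cases hy : y ∈ ({u, v}ᶜ : Set V)
        · have hy2 := hxy y hy
          rw [localConn_self] at hy2
          exact localConn_ne_top G hxyne hy2
        · simp only [Set.mem_compl_iff, Set.mem_insert_iff, Set.mem_singleton_iff,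
            not_not] at hx hy
          have hw : w ∈ ({u, v}ᶜ : Set V) := by
            simp only [Set.mem_compl_iff, Set.mem_insert_iff, Set.mem_singleton_iff, not_or]
            exact ⟨hwu, hwv⟩
          have hxyw := hxy w hw
          rcases hx with rfl | rfl <;> rcases hy with rfl | rfl
          · exact hxyne rfl
          · exact hne' hxyw
          · exact hne' hxyw.symm
          · exact hxyne rfl
      have hncard : ({u, v}ᶜ : Set V).ncard = Fintype.card V - 2 := by
        have h1 := Set.ncard_add_ncard_compl ({u, v} : Set V)
        rw [Nat.card_eq_fintype_card, Set.ncard_pair huv] at h1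
        omega
      have hle : cdim G ≤ Fintype.card V - 2 :=
        Nat.sInf_le ⟨({u, v}ᶜ : Set V), hres, hncard⟩
      omega
    by_cases h1 : Fintype.card V ≤ 1
    · refine ⟨0, fun v w hvw => ?_⟩
      have : Subsingleton V := Fintype.card_le_one_iff_subsingleton.mp h1
      exact absurd (Subsingleton.elim v w) hvw
    · push_neg at h1
      obtain ⟨a, b, hab⟩ := Fintype.exists_pair_of_one_lt_card h1
      refine ⟨(localConn G a b).toNat, ?_⟩
      have h1' : ∀ x y z : V, y ≠ z → x ≠ z → localConn G y z = localConn G x z := by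
        intro x y z hyz hxz
        rcases eq_or_ne y x with rfl | hyx
        · rfl
        · exact hC y x z hyx hyz.symm hxz.symm
      have key : ∀ v w : V, v ≠ w → localConn G v w = localConn G a b := by
        intro v w hvw
        rcases eq_or_ne w b with rfl | hwb
        · exact h1' a v w hvw hab
        · calc localConn G v w = localConn G b w := h1' b v w hvw (Ne.symm hwb)
            _ = localConn G w b := localConn_comm G b w
            _ = localConn G a b := h1' a w b hwb hab
      intro v w hvw
      rw [key v w hvw]
      exact (ENat.coe_toNat (localConn_ne_top G hab)).symm
  · rintro ⟨k, hk⟩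
    obtain ⟨x⟩ := hne
    have hres : ConnResolving G ({x}ᶜ : Set V) := by
      intro u v huv
      by_contra hne'
      by_cases hu : u ∈ ({x}ᶜ : Set V)
      · have h2 := huv u hu
        rw [localConn_self, hk v u (Ne.symm hne')] at h2
        simp at h2
      by_cases hv : v ∈ ({x}ᶜ : Set V)
      · have h2 := huv v hv
        rw [localConn_self, hk u v hne'] at h2
        simp at h2
      · simp only [Set.mem_compl_iff, Set.mem_singleton_iff, not_not] at hu hv
        exact hne' (hu.trans hv.symm)
    have hncard : ({x}ᶜ : Set V).ncard = Fintype.card V - 1 := by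
      have h1 := Set.ncard_add_ncard_compl ({x} : Set V)
      rw [Nat.card_eq_fintype_card, Set.ncard_singleton] at h1
      omega
    have hmem : (Fintype.card V - 1) ∈
        {n : ℕ | ∃ W : Set V, ConnResolving G W ∧ W.ncard = n} :=
      ⟨({x}ᶜ : Set V), hres, hncard⟩
    have hlow : ∀ m ∈ {n : ℕ | ∃ W : Set V, ConnResolving G W ∧ W.ncard = n},
        Fintype.card V - 1 ≤ m := by
      rintro m ⟨W, hW, rfl⟩
      by_contra hlt
      push_neg at hlt
      have hcomp : 1 < (Wᶜ : Set V).ncard := by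
        have h1 := Set.ncard_add_ncard_compl W
        rw [Nat.card_eq_fintype_card] at h1
        omega
      obtain ⟨u, v, hu, hv, huv⟩ := (Set.one_lt_ncard_iff (Set.toFinite _)).mp hcomp
      refine huv (hW u v fun w hw => ?_)
      have hwu : w ≠ u := fun h => hu (h ▸ hw)
      have hwv : w ≠ v := fun h => hv (h ▸ hw)
      rw [hk u w (Ne.symm hwu), hk v w (Ne.symm hwv)]
    exact le_antisymm (Nat.sInf_le hmem) (le_csInf ⟨_, hmem⟩ hlow)


end ConnDim
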